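/- arXiv:1306.5317 — 3 statements merged into one kernel-verified Lean document; each statement's English description precedes it below -/
import Mathlib

section
/- Let G be a Lie group with Lie algebra 𝔤 and let π : G → B(Y)ˣ be a uniformly bounded representation on a Banach space Y. Let X₁, …, X_m be a basis of 𝔤 and γ_{X_j}(t) := exp_G(t X_j). Then a functional ξ ∈ Y* has norm-continuous orbit map g ↦ π*(g)ξ on G if and only if for each j ∈ {1,…,m} the map t ↦ π*(γ_{X_j}(t))ξ is norm-continuous from ℝ to Y*. (That is, Y_{π*₀} = ⋂_{j=1}^m Y_{π*∘γ_{X_j}}.) -/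
open Filter Topology

/-!
The orbit map of `ξ` under the contragredient representation `π*` is continuous as soon as it
is continuous at `1`, since `π*(g₀ g) ξ = π*(g₀) (π*(g) ξ)`. Continuity at `1` passes to
products: by uniform boundedness, `‖π*(h k) ξ - ξ‖ ≤ M ‖π*(k) ξ - ξ‖ + ‖π*(h) ξ - ξ‖`. Hence
`t ↦ π*(γ₁(t₁) ⋯ γ_m(t_m)) ξ` tends to `ξ` at `0`, and the products `γ₁(t₁) ⋯ γ_m(t_m)`
fill a neighbourhood of `1`.
-/

/-- The Banach-space adjoint (transpose) of a bounded operator, acting on the dual. -/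
noncomputable def contraDual {Y : Type*} [NormedAddCommGroup Y] [NormedSpace ℂ Y]
    (T : Y →L[ℂ] Y) : StrongDual ℂ Y →L[ℂ] StrongDual ℂ Y :=
  (ContinuousLinearMap.compL ℂ Y Y ℂ).flip T

section Orbit

variable {𝕜 E G : Type*} [NontriviallyNormedField 𝕜] [NormedAddCommGroup E] [NormedSpace 𝕜 E]
  [Group G] (ρ : G →* (E →L[𝕜] E))

theorem tendsto_orbit_mul {M : ℝ} (hM : ∀ g, ‖ρ g‖ ≤ M) {ι : Type*} {l : Filter ι}
    {h k : ι → G} {v : E} (hh : Tendsto (fun i => ρ (h i) v) l (𝓝 v))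
    (hk : Tendsto (fun i => ρ (k i) v) l (𝓝 v)) :
    Tendsto (fun i => ρ (h i * k i) v) l (𝓝 v) := by
  have hk' : Tendsto (fun i => ‖ρ (k i) v - v‖) l (𝓝 0) :=
    tendsto_iff_norm_sub_tendsto_zero.1 hk
  have hshift : Tendsto (fun i => ρ (h i) (ρ (k i) v - v)) l (𝓝 0) := by
    refine squeeze_zero_norm (fun i => ?_) (by simpa using hk'.const_mul M)
    calc ‖ρ (h i) (ρ (k i) v - v)‖ ≤ ‖ρ (h i)‖ * ‖ρ (k i) v - v‖ := (ρ (h i)).le_opNorm _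
      _ ≤ M * ‖ρ (k i) v - v‖ := by gcongr; exact hM _
  have hsum : ∀ i, ρ (h i * k i) v = ρ (h i) (ρ (k i) v - v) + ρ (h i) v := by
    intro i
    rw [map_mul, map_sub, sub_add_cancel, mul_apply_eq_comp]
  simpa only [hsum, zero_add] using hshift.add hh

theorem tendsto_orbit_ofFn_prod {M : ℝ} (hM : ∀ g, ‖ρ g‖ ≤ M) {ι : Type*} {l : Filter ι}
    {v : E} {n : ℕ} {f : Fin n → ι → G} (hf : ∀ j, Tendsto (fun i => ρ (f j i) v) l (𝓝 v)) :
    Tendsto (fun i => ρ (List.ofFn fun j => f j i).prod v) l (𝓝 v) := by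
  induction n with
  | zero => simpa using tendsto_const_nhds
  | succ n ih =>
    simp only [List.ofFn_succ, List.prod_cons]
    exact tendsto_orbit_mul ρ hM (hf 0) (ih fun j => hf j.succ)

theorem continuous_orbit_of_continuousAt_one [TopologicalSpace G] [ContinuousMul G] {v : E}
    (h : ContinuousAt (fun g => ρ g v) 1) : Continuous fun g => ρ g v := by
  refine continuous_iff_continuousAt.2 fun g₀ => ?_
  have hleft : Tendsto (fun g => g₀⁻¹ * g) (𝓝 g₀) (𝓝 1) := by
    simpa using (continuous_const_mul g₀⁻¹).tendsto g₀
  have hcomp := (ρ g₀).continuous.continuousAt.tendsto.comp (h.tendsto.comp hleft)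
  simpa [ContinuousAt, Function.comp_def, ← mul_apply_eq_comp, ← map_mul] using hcomp

end Orbit

section Contragredient

variable {Y : Type*} [NormedAddCommGroup Y] [NormedSpace ℂ Y]

theorem contraDual_apply (T : Y →L[ℂ] Y) (η : StrongDual ℂ Y) : contraDual T η = η.comp T :=
  rfl

theorem contraDual_one : contraDual (1 : Y →L[ℂ] Y) = 1 := by
  ext η y
  rfl

theorem contraDual_mul (S T : Y →L[ℂ] Y) : contraDual (S * T) = contraDual T * contraDual S := by
  ext η y
  rfl

theorem norm_contraDual_le (T : Y →L[ℂ] Y) : ‖contraDual T‖ ≤ ‖T‖ :=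
  ContinuousLinearMap.opNorm_le_bound _ (norm_nonneg T) fun η => by
    rw [contraDual_apply, mul_comm]
    exact η.opNorm_comp_le T

variable {G : Type*} [Group G]

noncomputable def contragredient (π : G →* (Y →L[ℂ] Y)ˣ) :
    G →* (StrongDual ℂ Y →L[ℂ] StrongDual ℂ Y) where
  toFun g := contraDual (π g⁻¹ : Y →L[ℂ] Y)
  map_one' := by simp [contraDual_one]
  map_mul' g h := by simp [contraDual_mul]

theorem contragredient_apply (π : G →* (Y →L[ℂ] Y)ˣ) (g : G) :
    contragredient π g = contraDual (π g⁻¹ : Y →L[ℂ] Y) :=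
  rfl

theorem norm_contragredient_le (π : G →* (Y →L[ℂ] Y)ˣ) {M : ℝ}
    (hM : ∀ g : G, ‖(π g : Y →L[ℂ] Y)‖ ≤ M) (g : G) : ‖contragredient π g‖ ≤ M :=
  (norm_contraDual_le _).trans (hM _)

end Contragredient

/-- `γ j t` stands for `exp_G (t X_j)`, and `hloc` encodes the local diffeomorphism
`(t₁, …, t_m) ↦ γ₁ (t₁) ⋯ γ_m (t_m)` at `0` through its consequence that images of
neighbourhoods of `0 ∈ ℝ^m` are neighbourhoods of `1 ∈ G`. -/
theorem stmt5_general {Y : Type*} [NormedAddCommGroup Y] [NormedSpace ℂ Y]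
    {G : Type*} [Group G] [TopologicalSpace G] [IsTopologicalGroup G]
    (π : G →* (Y →L[ℂ] Y)ˣ) {M : ℝ} (hM : ∀ g : G, ‖(π g : Y →L[ℂ] Y)‖ ≤ M)
    {m : ℕ} (γ : Fin m → ℝ → G)
    (hγ0 : ∀ j, γ j 0 = 1)
    (hγcont : ∀ j, Continuous (γ j))
    (hloc : nhds (1 : G) ≤
      Filter.map (fun t : Fin m → ℝ => (List.ofFn fun j => γ j (t j)).prod)
        (nhds (0 : Fin m → ℝ)))
    (ξ : StrongDual ℂ Y) :
    (Continuous fun g => contraDual (π g⁻¹ : Y →L[ℂ] Y) ξ) ↔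
      ∀ j, Continuous fun t : ℝ => contraDual (π (γ j t)⁻¹ : Y →L[ℂ] Y) ξ := by
  set ρ := contragredient π
  refine ⟨fun h j => h.comp (hγcont j), fun hj => ?_⟩
  have hcoord : ∀ j, Tendsto (fun t : Fin m → ℝ => ρ (γ j (t j)) ξ) (𝓝 0) (𝓝 ξ) := by
    intro j
    have h0 : Tendsto (fun s => ρ (γ j s) ξ) (𝓝 0) (𝓝 ξ) := by
      simpa [ρ, contragredient_apply, hγ0 j, contraDual_one] using (hj j).tendsto 0
    exact h0.comp ((continuous_apply j).tendsto 0)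
  have hprod := tendsto_orbit_ofFn_prod ρ (norm_contragredient_le π hM) hcoord
  refine continuous_orbit_of_continuousAt_one ρ (v := ξ) ?_
  simpa [ContinuousAt] using (tendsto_map'_iff.2 hprod).mono_left hloc

/-- let `G` be a Lie group, presented through one-parameter subgroups
`γ_j (t) = exp_G (t X_j)` associated with a basis `X₁, …, X_m` of its Lie algebra, so that
`(t₁, …, t_m) ↦ γ₁ (t₁) ⋯ γ_m (t_m)` is a local diffeomorphism at `0` (in particular the
image of any neighborhood of `0 ∈ ℝ^m` is a neighborhood of `1 ∈ G`, which is the hypothesis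
`hloc`).  If `π` is a uniformly bounded representation of `G` on a Banach space `Y`, then a
functional `ξ ∈ Y*` has norm-continuous orbit map `g ↦ π* (g) ξ` on `G` if and only if for
each `j` the map `t ↦ π* (γ_j (t)) ξ` is norm-continuous on `ℝ`. -/
theorem stmt5 {Y : Type*} [NormedAddCommGroup Y] [NormedSpace ℂ Y] [CompleteSpace Y]
    {G : Type*} [Group G] [TopologicalSpace G] [IsTopologicalGroup G]
    (π : G →* (Y →L[ℂ] Y)ˣ) {M : ℝ} (hM : ∀ g : G, ‖(π g : Y →L[ℂ] Y)‖ ≤ M)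
    {m : ℕ} (γ : Fin m → ℝ → G)
    (hγ0 : ∀ j, γ j 0 = 1) (hγadd : ∀ j s t, γ j (s + t) = γ j s * γ j t)
    (hγcont : ∀ j, Continuous (γ j))
    (hloc : nhds (1 : G) ≤
      Filter.map (fun t : Fin m → ℝ => (List.ofFn fun j => γ j (t j)).prod)
        (nhds (0 : Fin m → ℝ)))
    (ξ : StrongDual ℂ Y) :
    (Continuous fun g => contraDual (π g⁻¹ : Y →L[ℂ] Y) ξ) ↔
      ∀ j, Continuous fun t : ℝ => contraDual (π (γ j t)⁻¹ : Y →L[ℂ] Y) ξ :=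
  stmt5_general π hM γ hγ0 hγcont hloc ξ
end

section
/- There exists a bounded function φ ∈ L^∞(ℝ) that is globally Lipschitz on ℝ but whose derivative does not exist everywhere as a bounded uniformly continuous function; consequently, for the translation group ρ(t)f = f(·+t) on L²(ℝ) and the induced representation π(t)A = ρ(t)Aρ(t)⁻¹ on trace-class operators, the multiplication operator φ(Q) lies in C¹(π*) but the map t ↦ π*(t)φ(Q) is not of class C¹ from ℝ to B(L²(ℝ)). -/
/-!
The witness is `φ x = min |x| 1`: bounded, `1`-Lipschitz, with a corner at `0`.
Conjugating `φ(Q)` by the translation `ρ t` gives multiplication by `φ (· + t)`, so the orbit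
map `F t = ρ t φ(Q) ρ (-t)` inherits the Lipschitz constant of `φ` in operator norm. If `F` were
differentiable at `0`, the central second difference `F h - F 0 + (F (-h) - F 0)` would be
`o(h)`; but it is multiplication by `φ (x + h) + φ (x - h) - 2 φ x ≥ h` on `[-h/2, h/2]`, so
testing it on the indicator of that interval shows its norm is at least `h`.
-/

open MeasureTheory Filter Set Topology Asymptotics

def IsMulOperator {α 𝕜 : Type*} [MeasurableSpace α] [RCLike 𝕜] {μ : Measure α}
    {p : ENNReal} [Fact (1 ≤ p)] (T : Lp 𝕜 p μ →L[𝕜] Lp 𝕜 p μ) (c : α → 𝕜) : Prop :=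
  ∀ f : Lp 𝕜 p μ, (T f : α → 𝕜) =ᵐ[μ] fun x => c x * f x

namespace IsMulOperator

variable {α 𝕜 : Type*} [MeasurableSpace α] [RCLike 𝕜] {μ : Measure α} {p : ENNReal}
  [Fact (1 ≤ p)] {T S : Lp 𝕜 p μ →L[𝕜] Lp 𝕜 p μ} {c d : α → 𝕜}

theorem add (hT : IsMulOperator T c) (hS : IsMulOperator S d) :
    IsMulOperator (T + S) fun x => c x + d x := fun f => by
  filter_upwards [Lp.coeFn_add (T f) (S f), hT f, hS f] with x hx hTx hSx
  rw [add_apply, hx, Pi.add_apply, hTx, hSx, add_mul]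

theorem sub (hT : IsMulOperator T c) (hS : IsMulOperator S d) :
    IsMulOperator (T - S) fun x => c x - d x := fun f => by
  filter_upwards [Lp.coeFn_sub (T f) (S f), hT f, hS f] with x hx hTx hSx
  rw [sub_apply, hx, Pi.sub_apply, hTx, hSx, sub_mul]

theorem opNorm_le (hT : IsMulOperator T c) {M : ℝ} (hM : 0 ≤ M) (hc : ∀ x, ‖c x‖ ≤ M) :
    ‖T‖ ≤ M :=
  T.opNorm_le_bound hM fun f => Lp.norm_le_mul_norm_of_ae_le_mul <| by
    filter_upwards [hT f] with x hx
    rw [hx, norm_mul]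
    exact mul_le_mul_of_nonneg_right (hc x) (norm_nonneg _)

theorem le_opNorm (hT : IsMulOperator T c) {s : Set α} (hs : MeasurableSet s) (hμs₀ : μ s ≠ 0)
    (hμs : μ s ≠ ⊤) {m : ℝ} (hm : ∀ x ∈ s, m ≤ ‖c x‖) : m ≤ ‖T‖ := by
  rcases lt_or_ge m 0 with hm₀ | hm₀
  · exact hm₀.le.trans (norm_nonneg T)
  set f : Lp 𝕜 p μ := indicatorConstLp p hs hμs 1
  have hf : 0 < ‖f‖ := by
    rw [norm_indicatorConstLp' (zero_lt_one.trans_le Fact.out).ne' hμs₀, norm_one, one_mul]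
    exact Real.rpow_pos_of_pos (ENNReal.toReal_pos hμs₀ hμs) _
  have hf_ae : (f : α → 𝕜) =ᵐ[μ] s.indicator fun _ => 1 := indicatorConstLp_coeFn
  have hTf : ‖(m : 𝕜) • f‖ ≤ 1 * ‖T f‖ := Lp.norm_le_mul_norm_of_ae_le_mul <| by
    filter_upwards [Lp.coeFn_smul (m : 𝕜) f, hT f, hf_ae] with x hsm hTx hfx
    rw [hsm, Pi.smul_apply, hTx, hfx, one_mul, norm_smul, norm_mul, RCLike.norm_ofReal,
      abs_of_nonneg hm₀]
    by_cases hx : x ∈ s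
    · simpa [indicator_of_mem hx] using hm x hx
    · simp [indicator_of_notMem hx]
  rw [norm_smul, RCLike.norm_ofReal, abs_of_nonneg hm₀, one_mul] at hTf
  exact le_of_mul_le_mul_right (hTf.trans (T.le_opNorm f)) hf

end IsMulOperator

theorem HasDerivAt.isLittleO_centralSecondDiff {E : Type*} [NormedAddCommGroup E]
    [NormedSpace ℝ E] {f : ℝ → E} {f' : E} {x : ℝ} (hf : HasDerivAt f f' x) :
    (fun h => f (x + h) - f x + (f (x + -h) - f x)) =o[𝓝 0] fun h => h := by
  have ho := hasDerivAt_iff_isLittleO_nhds_zero.mp hf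
  have ho' : (fun h => f (x + -h) - f x - (-h) • f') =o[𝓝 0] fun h => h := by
    have := ho.comp_tendsto (by simpa using (continuous_neg.tendsto (0 : ℝ)))
    exact isLittleO_neg_right.mp this
  refine (ho.add ho').congr_left fun h => ?_
  simp only [neg_smul]
  abel

section Conjugation

variable {𝕜 : Type*} [RCLike 𝕜] {p : ENNReal} [Fact (1 ≤ p)]
  {ρ : ℝ → Lp 𝕜 p (volume : Measure ℝ) →L[𝕜] Lp 𝕜 p (volume : Measure ℝ)}
  {M : Lp 𝕜 p (volume : Measure ℝ) →L[𝕜] Lp 𝕜 p (volume : Measure ℝ)} {φ : ℝ → 𝕜}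

theorem isMulOperator_conj (hρ : ∀ t f, (ρ t f : ℝ → 𝕜) =ᵐ[volume] fun x => f (x + t))
    (hM : IsMulOperator M φ) (t : ℝ) :
    IsMulOperator (ρ t ∘L M ∘L ρ (-t)) fun x => φ (x + t) := fun f => by
  have shift := (measurePreserving_add_right (volume : Measure ℝ) t).quasiMeasurePreserving
  filter_upwards [hρ t (M (ρ (-t) f)), shift.ae_eq_comp (hM (ρ (-t) f)),
    shift.ae_eq_comp (hρ (-t) f)] with x h₁ h₂ h₃
  simp only [ContinuousLinearMap.comp_apply, Function.comp_apply] at h₁ h₂ h₃ ⊢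
  rw [h₁, h₂, h₃, add_neg_cancel_right]

theorem lipschitzWith_conj (hρ : ∀ t f, (ρ t f : ℝ → 𝕜) =ᵐ[volume] fun x => f (x + t))
    (hM : IsMulOperator M φ) {K : NNReal} (hφ : LipschitzWith K φ) :
    LipschitzWith K fun t => ρ t ∘L M ∘L ρ (-t) := by
  refine LipschitzWith.of_dist_le_mul fun t s => ?_
  rw [dist_eq_norm]
  refine ((isMulOperator_conj hρ hM t).sub (isMulOperator_conj hρ hM s)).opNorm_le
    (by positivity) fun x => ?_
  rw [← dist_eq_norm]
  simpa [Real.dist_eq] using hφ.dist_le_mul (x + t) (x + s)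

end Conjugation

def clippedAbs (x : ℝ) : ℂ := ((min |x| 1 : ℝ) : ℂ)

theorem norm_clippedAbs_le (x : ℝ) : ‖clippedAbs x‖ ≤ 1 := by
  rw [clippedAbs, Complex.norm_real, Real.norm_of_nonneg (by positivity)]
  exact min_le_right _ _

theorem lipschitzWith_clippedAbs : LipschitzWith 1 clippedAbs := by
  have h : LipschitzWith 1 fun x : ℝ => min |x| 1 := by
    simpa [Real.norm_eq_abs] using
      (lipschitzWith_one_norm (E := ℝ)).min (LipschitzWith.const' (1 : ℝ) (K := 1))
  exact mul_one (1 : NNReal) ▸ Complex.isometry_ofReal.lipschitz.comp h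

theorem not_differentiableAt_clippedAbs_zero : ¬ DifferentiableAt ℝ clippedAbs 0 := by
  intro hd
  refine not_differentiableAt_abs_zero
    ((Complex.reCLM.differentiableAt.comp 0 hd).congr_of_eventuallyEq ?_)
  filter_upwards [Ioo_mem_nhds (neg_lt_zero.mpr one_pos) one_pos] with x hx
  simp [clippedAbs, abs_lt.mpr hx |>.le]

theorem le_norm_clippedAbs_centralSecondDiff {h x : ℝ} (h₀ : 0 < h) (h₁ : h ≤ 1 / 2)
    (hx : |x| ≤ h / 2) :
    h ≤ ‖clippedAbs (x + h) - clippedAbs x + (clippedAbs (x + -h) - clippedAbs x)‖ := by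
  obtain ⟨hxl, hxr⟩ := abs_le.mp hx
  have hmin : ∀ y : ℝ, |y| ≤ 1 → clippedAbs y = |y| := fun y hy => by
    rw [clippedAbs, min_eq_left hy]
  rw [hmin (x + h) (abs_le.mpr ⟨by linarith, by linarith⟩),
    hmin (x + -h) (abs_le.mpr ⟨by linarith, by linarith⟩),
    hmin x (by linarith), abs_of_pos (by linarith : 0 < x + h),
    abs_of_neg (by linarith : x + -h < 0)]
  norm_cast
  rw [Real.norm_eq_abs]
  refine le_trans ?_ (le_abs_self _)
  linarith

theorem not_differentiableAt_conj_clippedAbs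
    {ρ : ℝ → Lp ℂ 2 (volume : Measure ℝ) →L[ℂ] Lp ℂ 2 (volume : Measure ℝ)}
    {M : Lp ℂ 2 (volume : Measure ℝ) →L[ℂ] Lp ℂ 2 (volume : Measure ℝ)}
    (hρ : ∀ t f, (ρ t f : ℝ → ℂ) =ᵐ[volume] fun x => f (x + t))
    (hM : IsMulOperator M clippedAbs) :
    ¬ DifferentiableAt ℝ (fun t => ρ t ∘L M ∘L ρ (-t)) 0 := by
  set F := fun t => ρ t ∘L M ∘L ρ (-t)
  intro hd
  have hsmall := hd.hasDerivAt.isLittleO_centralSecondDiff.def (by norm_num : (0 : ℝ) < 1 / 2)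
  simp only [zero_add] at hsmall
  have hlarge : ∀ h ∈ Ioc (0 : ℝ) (1 / 2), h ≤ ‖F h - F 0 + (F (-h) - F 0)‖ := by
    rintro h ⟨h₀, h₁⟩
    have hD := ((isMulOperator_conj hρ hM h).sub (isMulOperator_conj hρ hM 0)).add
      ((isMulOperator_conj hρ hM (-h)).sub (isMulOperator_conj hρ hM 0))
    refine hD.le_opNorm (s := Icc (-(h / 2)) (h / 2)) measurableSet_Icc ?_ ?_ fun x hx => ?_
    · simpa [Real.volume_Icc] using h₀
    · simp [Real.volume_Icc]
    · simpa using le_norm_clippedAbs_centralSecondDiff h₀ h₁ (abs_le.mpr hx)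
  obtain ⟨h, hh, hIoc⟩ := ((hsmall.filter_mono nhdsWithin_le_nhds).and
    (Ioc_mem_nhdsGT (by norm_num : (0 : ℝ) < 1 / 2))).exists
  have := (hlarge h hIoc).trans hh
  rw [Real.norm_of_nonneg hIoc.1.le] at this
  linarith [hIoc.1]

/-- there is a bounded globally Lipschitz `φ ∈ L^∞(ℝ)` whose derivative does not
exist everywhere as a bounded uniformly continuous function; consequently, for the translation
group `ρ (t) f = f (· + t)` on `L²(ℝ)` and the induced conjugation representation, the
multiplication operator `φ(Q)` lies in `C¹(π*)` (equivalently, its orbit map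
`t ↦ π* (t) φ(Q) = ρ (t) φ(Q) ρ (t)⁻¹` is Lipschitz in operator norm, which expresses the
boundedness of the commutator `[φ(Q), P]`), while this orbit map is not of class `C¹` from
`ℝ` to `B(L²(ℝ))`. -/
theorem stmt7 :
    ∃ φ : ℝ → ℂ,
      (∃ C : ℝ, ∀ x : ℝ, ‖φ x‖ ≤ C) ∧
      (∃ L : NNReal, LipschitzWith L φ) ∧
      ¬ (∃ ψ : ℝ → ℂ, (∃ C : ℝ, ∀ x : ℝ, ‖ψ x‖ ≤ C) ∧ UniformContinuous ψ ∧
          ∀ x : ℝ, HasDerivAt φ (ψ x) x) ∧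
      ∀ (ρ : ℝ → (Lp ℂ 2 (volume : Measure ℝ)) →L[ℂ] Lp ℂ 2 (volume : Measure ℝ))
        (Mφ : (Lp ℂ 2 (volume : Measure ℝ)) →L[ℂ] Lp ℂ 2 (volume : Measure ℝ)),
        (∀ (t : ℝ) (f : Lp ℂ 2 (volume : Measure ℝ)),
          (ρ t f : ℝ → ℂ) =ᵐ[volume] fun x => f (x + t)) →
        (∀ f : Lp ℂ 2 (volume : Measure ℝ),
          (Mφ f : ℝ → ℂ) =ᵐ[volume] fun x => φ x * f x) →
        (∃ L' : NNReal, LipschitzWith L' fun t : ℝ => ρ t ∘L Mφ ∘L ρ (-t)) ∧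
        ¬ ContDiff ℝ 1 fun t : ℝ => ρ t ∘L Mφ ∘L ρ (-t) := by
  refine ⟨clippedAbs, ⟨1, norm_clippedAbs_le⟩, ⟨1, lipschitzWith_clippedAbs⟩, ?_, ?_⟩
  · rintro ⟨ψ, -, -, hψ⟩
    exact not_differentiableAt_clippedAbs_zero (hψ 0).differentiableAt
  · intro ρ Mφ hρ hMφ
    exact ⟨⟨1, lipschitzWith_conj hρ hMφ lipschitzWith_clippedAbs⟩,
      fun hC => not_differentiableAt_conj_clippedAbs hρ hMφ (hC.differentiable one_ne_zero 0)⟩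
end

section
/- Let (T(t))_{t∈ℝ} be a strongly continuous one-parameter group of unitary operators on a Hilbert space H with self-adjoint generator A (so T(t) = e^{itA}), and let Y ∈ B(H). If the map t ↦ T(t)YT(t)⁻¹ is differentiable at t = 0 in the strong operator topology with derivative D ∈ B(H), then for every x in the domain of A one has Yx ∈ D(A) and i(AY − YA)x = Dx; conversely, if Y maps D(A) into D(A) and the commutator i(AY − YA) defined on D(A) extends to a bounded operator D, then t ↦ T(t)YT(t)⁻¹x is differentiable for every x ∈ H with derivative T(t)DT(t)⁻¹x. -/
/-!
Write `Φ s = T s ∘ Y ∘ T (-s)`. For `x ∈ D(A)` one has `T s (Y x) = Φ s (T s x)`, and a product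
rule for the uniformly bounded, strongly differentiable family `Φ` shows that `s ↦ T s (Y x)` is
differentiable at `0`, i.e. `Y x ∈ D(A)`, with derivative `D x + Y (i A x)`. Conversely, writing
`Φ s z = T s (Y (T (-s) z))` the same product rule gives the derivative `i (A Y - Y A) z = D z` at
`0` for `z ∈ D(A)`; the group law moves this to every time `t`, and since the candidate
derivatives `T t D T (-t)` are bounded by `‖D‖` uniformly in `t`, differentiability passes from
the dense subspace `D(A)` to all of `H`.
-/

open Filter Asymptotics Topology

section Calculus

variable {E F : Type*} [NormedAddCommGroup E] [NormedSpace ℝ E]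
  [NormedAddCommGroup F] [NormedSpace ℝ F]

theorem HasDerivAt.clm_comp_sub_const (L : E →L[ℝ] F) {f : ℝ → E} {f' : E}
    (hf : HasDerivAt f f' 0) (t : ℝ) : HasDerivAt (fun s => L (f (s - t))) (L f') t :=
  (L.hasFDerivAt.comp_hasDerivAt (t - t) (by rwa [sub_self])).comp_sub_const t t

theorem HasDerivAt.clm_apply_of_eventually_norm_le {L : ℝ → E →L[ℝ] F} {C a : ℝ}
    (hL : ∀ᶠ s in 𝓝 a, ‖L s‖ ≤ C) {g : ℝ → E} {g' : E} {w : F} (hg : HasDerivAt g g' a)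
    (hLg : HasDerivAt (fun s => L s (g a)) w a) (hLg' : ContinuousAt (fun s => L s g') a) :
    HasDerivAt (fun s => L s (g s)) (w + L a g') a := by
  rw [hasDerivAt_iff_isLittleO] at hg hLg ⊢
  have hL_remainder : (fun s => L s (g s - g a - (s - a) • g')) =o[𝓝 a] fun s => s - a :=
    (IsBigO.of_bound C (hL.mono fun s hs => (L s).le_of_opNorm_le hs _)).trans_isLittleO hg
  have hL_drift : (fun s => (s - a) • (L s g' - L a g')) =o[𝓝 a] fun s => s - a := by
    have h := (isBigO_refl (fun s : ℝ => s - a) (𝓝 a)).smul_isLittleO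
      (isLittleO_one_iff ℝ |>.mpr (tendsto_sub_nhds_zero_iff.mpr hLg'))
    simpa only [smul_eq_mul, mul_one] using h
  refine ((hLg.add hL_remainder).add hL_drift).congr_left fun s => ?_
  simp only [map_sub, map_smul, smul_add, smul_sub]
  abel

theorem hasDerivAt_apply_of_dense {L L' : ℝ → E →L[ℝ] F} {C : ℝ} (hL' : ∀ s, ‖L' s‖ ≤ C)
    {S : Set E} (hS : Dense S) (h : ∀ z ∈ S, ∀ t, HasDerivAt (fun s => L s z) (L' t z) t)
    (x : E) (t : ℝ) : HasDerivAt (fun s => L s x) (L' t x) t := by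
  obtain ⟨u, hu_mem, hu_lim⟩ := mem_closure_iff_seq_limit.mp (hS x)
  have h_unif : TendstoUniformly (fun n s => L' s (u n)) (fun s => L' s x) atTop := by
    rw [Metric.tendstoUniformly_iff]
    intro ε hε
    have h_small : Tendsto (fun n => C * ‖x - u n‖) atTop (𝓝 0) := by
      simpa using ((tendsto_iff_norm_sub_tendsto_zero.mp hu_lim).const_mul C).congr
        fun n => by rw [norm_sub_rev]
    filter_upwards [h_small.eventually_lt_const hε] with n hn s
    calc dist (L' s x) (L' s (u n)) = ‖L' s (x - u n)‖ := by rw [dist_eq_norm, map_sub]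
      _ ≤ C * ‖x - u n‖ := (L' s).le_of_opNorm_le (hL' s) _
      _ < ε := hn
  exact hasDerivAt_of_tendstoUniformly h_unif (Eventually.of_forall fun n => h _ (hu_mem n))
    (fun s => ((L s).continuous.tendsto x).comp hu_lim) t

end Calculus

structure IsGenerator {H : Type*} [NormedAddCommGroup H] [NormedSpace ℂ H]
    (A : H →ₗ.[ℂ] H) (T : ℝ → H →L[ℂ] H) : Prop where
  mem_domain_iff : ∀ x : H, (∃ y : H, HasDerivAt (fun t => T t x) y 0) ↔ x ∈ A.domain
  hasDerivAt : ∀ x : A.domain, HasDerivAt (fun t => T t (x : H)) (Complex.I • A x) 0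

theorem IsGenerator.exists_mem_domain_of_hasDerivAt {H : Type*} [NormedAddCommGroup H]
    [NormedSpace ℂ H] {A : H →ₗ.[ℂ] H} {T : ℝ → H →L[ℂ] H} (hA : IsGenerator A T)
    {x y : H} (h : HasDerivAt (fun t => T t x) y 0) :
    ∃ hx : x ∈ A.domain, Complex.I • A ⟨x, hx⟩ = y :=
  ⟨(hA.mem_domain_iff x).mp ⟨y, h⟩, (hA.hasDerivAt _).unique h⟩

structure IsUnitaryGroup {H : Type*} [NormedAddCommGroup H] [InnerProductSpace ℂ H]
    [CompleteSpace H] (T : ℝ → H →L[ℂ] H) : Prop where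
  map_zero : T 0 = 1
  map_add : ∀ s t, T (s + t) = T s ∘L T t
  mem_unitary : ∀ t, T t ∈ unitary (H →L[ℂ] H)

namespace IsUnitaryGroup

variable {H : Type*} [NormedAddCommGroup H] [InnerProductSpace ℂ H] [CompleteSpace H]
  {T : ℝ → H →L[ℂ] H}

theorem norm_apply (hT : IsUnitaryGroup T) (t : ℝ) (z : H) : ‖T t z‖ = ‖z‖ :=
  ContinuousLinearMap.norm_map_of_mem_unitary (hT.mem_unitary t) z

theorem apply_apply (hT : IsUnitaryGroup T) (s t : ℝ) (z : H) : T s (T t z) = T (s + t) z := by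
  rw [hT.map_add, ContinuousLinearMap.comp_apply]

theorem apply_eq_apply_sub (hT : IsUnitaryGroup T) (s t : ℝ) (z : H) :
    T s z = T t (T (s - t) z) := by
  rw [hT.apply_apply, add_sub_cancel]

theorem neg_apply_apply (hT : IsUnitaryGroup T) (t : ℝ) (z : H) : T (-t) (T t z) = z := by
  rw [hT.apply_apply, neg_add_cancel, hT.map_zero]
  rfl

theorem norm_le_one (hT : IsUnitaryGroup T) (t : ℝ) : ‖T t‖ ≤ 1 :=
  ContinuousLinearMap.opNorm_le_bound _ zero_le_one fun z => by rw [hT.norm_apply, one_mul]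

theorem norm_conj_le (hT : IsUnitaryGroup T) (Y : H →L[ℂ] H) (s : ℝ) :
    ‖T s ∘L Y ∘L T (-s)‖ ≤ ‖Y‖ :=
  ContinuousLinearMap.opNorm_le_bound _ (norm_nonneg Y) fun z => by
    simpa only [ContinuousLinearMap.comp_apply, hT.norm_apply] using Y.le_opNorm (T (-s) z)

theorem hasDerivAt_apply_of_hasDerivAt_zero (hT : IsUnitaryGroup T) {x y : H}
    (h : HasDerivAt (fun s => T s x) y 0) (t : ℝ) : HasDerivAt (fun s => T s x) (T t y) t :=
  (HasDerivAt.clm_comp_sub_const ((T t).restrictScalars ℝ) h t).congr_of_eventuallyEq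
    (Eventually.of_forall fun s => hT.apply_eq_apply_sub s t x)

theorem hasDerivAt_conj_apply_of_hasDerivAt_zero (hT : IsUnitaryGroup T) {Y : H →L[ℂ] H} {z w : H} {t : ℝ}
    (h : HasDerivAt (fun s => (T s ∘L Y ∘L T (-s)) (T (-t) z)) w 0) :
    HasDerivAt (fun s => (T s ∘L Y ∘L T (-s)) z) (T t w) t := by
  refine (HasDerivAt.clm_comp_sub_const ((T t).restrictScalars ℝ) h t).congr_of_eventuallyEq
    (Eventually.of_forall fun s => ?_)
  simp only [ContinuousLinearMap.comp_apply, ContinuousLinearMap.coe_restrictScalars',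
    hT.apply_apply]
  rw [show -(s - t) + -t = -s by ring, add_sub_cancel]

theorem apply_mem_domain (hT : IsUnitaryGroup T) {A : H →ₗ.[ℂ] H} (hA : IsGenerator A T)
    (x : A.domain) (t : ℝ) : T t (x : H) ∈ A.domain := by
  have h : HasDerivAt (fun s => T s (x : H)) (T t (Complex.I • A x)) (0 + t) := by
    rw [zero_add]
    exact hT.hasDerivAt_apply_of_hasDerivAt_zero (hA.hasDerivAt x) t
  exact (hA.mem_domain_iff _).mp ⟨_, (h.comp_add_const 0 t).congr_of_eventuallyEq
    (Eventually.of_forall fun s => hT.apply_apply s t x)⟩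

theorem mem_domain_of_hasDerivAt_conj (hT : IsUnitaryGroup T) {A : H →ₗ.[ℂ] H} (hA : IsGenerator A T)
    {Y D : H →L[ℂ] H} (hD : ∀ x, HasDerivAt (fun t => (T t ∘L Y ∘L T (-t)) x) (D x) 0)
    (x : A.domain) :
    ∃ h : Y x ∈ A.domain, Complex.I • (A ⟨Y x, h⟩ - Y (A x)) = D x := by
  have hΦ : HasDerivAt (fun s => (T s ∘L Y ∘L T (-s)).restrictScalars ℝ (T s x))
      (D x + (T 0 ∘L Y ∘L T (-0)) (Complex.I • A x)) 0 :=
    HasDerivAt.clm_apply_of_eventually_norm_le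
      (Eventually.of_forall fun s => by simpa using hT.norm_conj_le Y s) (hA.hasDerivAt x)
      (by simpa [hT.map_zero] using hD x) (hD _).continuousAt
  have hYx : HasDerivAt (fun s => T s (Y x)) (D x + Y (Complex.I • A x)) 0 := by
    simpa [hT.neg_apply_apply, hT.map_zero] using hΦ
  obtain ⟨hmem, hAYx⟩ := hA.exists_mem_domain_of_hasDerivAt hYx
  refine ⟨hmem, ?_⟩
  rw [smul_sub, hAYx, map_smul]
  abel

theorem hasDerivAt_conj_apply_zero (hT : IsUnitaryGroup T)
    (hTcont : ∀ x : H, Continuous fun t => T t x) {A : H →ₗ.[ℂ] H}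
    (hgen : ∀ x : A.domain, HasDerivAt (fun t => T t (x : H)) (Complex.I • A x) 0)
    {Y : H →L[ℂ] H} (hY : ∀ x : A.domain, Y (x : H) ∈ A.domain) (z : A.domain) :
    HasDerivAt (fun s => (T s ∘L Y ∘L T (-s)) z)
      (Complex.I • (A ⟨Y z, hY z⟩ - Y (A z))) 0 := by
  have hTz : HasDerivAt (fun s => T s (z : H)) (Complex.I • A z) (-0) := by
    rw [neg_zero]
    exact hgen z
  have hg : HasDerivAt (fun s => Y (T (-s) z)) (-(Complex.I • Y (A z))) 0 := by
    refine ((Y.restrictScalars ℝ).hasFDerivAt.comp_hasDerivAt 0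
      (hTz.scomp 0 (hasDerivAt_neg 0))).congr_deriv ?_
    simp
  refine (HasDerivAt.clm_apply_of_eventually_norm_le (L := fun s => (T s).restrictScalars ℝ)
    (Eventually.of_forall fun s => by simpa using hT.norm_le_one s) hg
    (by simpa [hT.map_zero] using hgen ⟨Y z, hY z⟩) (hTcont _).continuousAt).congr_deriv ?_
  rw [ContinuousLinearMap.coe_restrictScalars', hT.map_zero, smul_sub, sub_eq_add_neg]
  rfl

theorem hasDerivAt_conj_of_commutator (hT : IsUnitaryGroup T)
    (hTcont : ∀ x : H, Continuous fun t => T t x) {A : H →ₗ.[ℂ] H}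
    (hdense : Dense (A.domain : Set H)) (hA : IsGenerator A T)
    {Y D : H →L[ℂ] H} (hY : ∀ x : A.domain, Y (x : H) ∈ A.domain)
    (hD : ∀ x : A.domain, D (x : H) = Complex.I • (A ⟨Y (x : H), hY x⟩ - Y (A x)))
    (x : H) (t : ℝ) :
    HasDerivAt (fun s => (T s ∘L Y ∘L T (-s)) x) ((T t ∘L D ∘L T (-t)) x) t := by
  refine hasDerivAt_apply_of_dense (L := fun s => (T s ∘L Y ∘L T (-s)).restrictScalars ℝ)
    (L' := fun s => (T s ∘L D ∘L T (-s)).restrictScalars ℝ)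
    (fun s => by simpa using hT.norm_conj_le D s) hdense (fun z hz t => ?_) x t
  have hmem := hT.apply_mem_domain hA ⟨z, hz⟩ (-t)
  refine hT.hasDerivAt_conj_apply_of_hasDerivAt_zero (w := D (T (-t) z)) ?_
  rw [show D (T (-t) z) = _ from hD ⟨_, hmem⟩]
  exact hT.hasDerivAt_conj_apply_zero hTcont hA.hasDerivAt hY ⟨_, hmem⟩

end IsUnitaryGroup

/-- let `T (t) = e^{i t A}` be the strongly continuous unitary one-parameter
group generated by a self-adjoint operator `A` on a Hilbert space `H` (so `x ∈ D(A)` iff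
`t ↦ T (t) x` is differentiable at `0`, with derivative `i A x` there), and let
`Y ∈ B(H)`.  (1) If `t ↦ T (t) Y T (t)⁻¹` is differentiable at `t = 0` in the strong
operator topology with derivative `D ∈ B(H)`, then for every `x ∈ D(A)` one has
`Y x ∈ D(A)` and `i (A Y − Y A) x = D x`.  (2) Conversely, if `Y` maps `D(A)` into `D(A)`
and the commutator `i (A Y − Y A)` on `D(A)` extends to a bounded operator `D`, then
`t ↦ T (t) Y T (t)⁻¹ x` is differentiable for every `x ∈ H`, with derivative
`T (t) D T (t)⁻¹ x`. -/
theorem stmt12 {H : Type*} [NormedAddCommGroup H] [InnerProductSpace ℂ H] [CompleteSpace H]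
    (A : H →ₗ.[ℂ] H) (hA : IsSelfAdjoint A)
    (T : ℝ → H →L[ℂ] H) (hT0 : T 0 = 1)
    (hTadd : ∀ s t : ℝ, T (s + t) = (T s).comp (T t))
    (hTu : ∀ t : ℝ, T t ∈ unitary (H →L[ℂ] H))
    (hTcont : ∀ x : H, Continuous fun t => T t x)
    (hdom : ∀ x : H, (∃ y : H, HasDerivAt (fun t => T t x) y 0) ↔ x ∈ A.domain)
    (hgen : ∀ x : A.domain, HasDerivAt (fun t => T t (x : H)) (Complex.I • A x) 0)
    (Y : H →L[ℂ] H) :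
    (∀ D : H →L[ℂ] H,
      (∀ x : H, HasDerivAt (fun t => (T t ∘L Y ∘L T (-t)) x) (D x) 0) →
      ∀ x : A.domain, ∃ h : Y (x : H) ∈ A.domain,
        Complex.I • (A ⟨Y (x : H), h⟩ - Y (A x)) = D (x : H)) ∧
    (∀ (hY : ∀ x : A.domain, Y (x : H) ∈ A.domain) (D : H →L[ℂ] H),
      (∀ x : A.domain, D (x : H) = Complex.I • (A ⟨Y (x : H), hY x⟩ - Y (A x))) →
      ∀ (x : H) (t : ℝ),
        HasDerivAt (fun s => (T s ∘L Y ∘L T (-s)) x) ((T t ∘L D ∘L T (-t)) x) t) := by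
  have hT : IsUnitaryGroup T := ⟨hT0, hTadd, hTu⟩
  have hAT : IsGenerator A T := ⟨hdom, hgen⟩
  exact ⟨fun D hD => hT.mem_domain_of_hasDerivAt_conj hAT hD,
    fun hY D hD => hT.hasDerivAt_conj_of_commutator hTcont hA.dense_domain hAT hY hD⟩
end
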